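/- arXiv:2008.01847 — 2 statements merged into one kernel-verified Lean document; each statement's English description precedes it below -/
import Mathlib

section
/- Let (X, w) be a weighted set and let F(X,w) together with f : X → F(X,w) be the free bounded archimedean ℓ-algebra on (X, w) (so ‖f(x)‖ ≤ w(x) for all x, and every function h : X → A into a bounded archimedean ℓ-algebra with ‖h(x)‖ ≤ w(x) factors uniquely through f via a bal-morphism). Then in fact ‖f(x)‖ = w(x) for every x ∈ X. -/
/-- An ℓ-algebra: a commutative unital ℝ-algebra with a lattice order such that
addition is translation-invariant, products of nonnegatives are nonnegative, and
scalar multiplication by nonnegative reals preserves nonnegativity. -/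
class LAlg (A : Type*) extends CommRing A, Lattice A, Algebra ℝ A where
  add_le_add_right' : ∀ a b : A, a ≤ b → ∀ c : A, a + c ≤ b + c
  mul_nonneg' : ∀ a b : A, 0 ≤ a → 0 ≤ b → 0 ≤ a * b
  smul_nonneg' : ∀ (r : ℝ) (a : A), 0 ≤ r → 0 ≤ a → 0 ≤ r • a

/-- `A` is bounded: `1` is a strong order unit. -/
def LAlg.IsBounded (A : Type*) [LAlg A] : Prop := ∀ a : A, ∃ n : ℕ, a ≤ n • (1 : A)

/-- `A` is archimedean. -/
def LAlg.IsArch (A : Type*) [LAlg A] : Prop := ∀ a b : A, (∀ n : ℕ, n • a ≤ b) → a ≤ 0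

/-- The norm ‖a‖ = inf {r : ℝ | |a| ≤ r·1}, where |a| = a ⊔ -a. -/
noncomputable def lnorm {A : Type*} [LAlg A] (a : A) : ℝ := sInf {r : ℝ | a ⊔ -a ≤ r • (1 : A)}

/-- A bal-morphism: a unital ℝ-algebra homomorphism preserving binary joins. -/
def IsBalHom {A B : Type*} [LAlg A] [LAlg B] (α : A →ₐ[ℝ] B) : Prop :=
  ∀ a b : A, α (a ⊔ b) = α a ⊔ α b

/-! The weight `w` is itself an admissible map into `ℝ`, so it factors through `f` via a
bal-morphism `α : F → ℝ`. Such an `α` is monotone and fixes the scalars `r • 1`, hence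
`w x = |α (f x)| ≤ ‖f x‖`. -/

noncomputable instance : LAlg ℝ where
  add_le_add_right' _ _ hab c := add_le_add_left hab c
  mul_nonneg' _ _ := mul_nonneg
  smul_nonneg' _ _ := smul_nonneg

namespace LAlg

theorem isBounded_real : IsBounded ℝ := fun a => ⟨⌈a⌉₊, by simpa using Nat.le_ceil a⟩

theorem isArch_real : IsArch ℝ := by
  intro a b hab
  by_contra! ha
  obtain ⟨n, hn⟩ := Archimedean.arch b ha
  have hle := hab (n + 1)
  rw [succ_nsmul] at hle
  linarith

end LAlg

theorem lnorm_real (r : ℝ) : lnorm r = |r| := by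
  have : {s : ℝ | r ⊔ -r ≤ s • (1 : ℝ)} = Set.Ici |r| := by
    ext s
    simp [abs_eq_max_neg]
  rw [lnorm, this, csInf_Ici]

namespace IsBalHom

theorem monotone {A B : Type*} [LAlg A] [LAlg B] {α : A →ₐ[ℝ] B} (hα : IsBalHom α) :
    Monotone α := fun a b hab =>
  calc α a ≤ α a ⊔ α b := le_sup_left
    _ = α b := by rw [← hα, sup_eq_right.mpr hab]

theorem abs_apply_le_lnorm {A : Type*} [LAlg A] (hA : LAlg.IsBounded A) {α : A →ₐ[ℝ] ℝ} (hα : IsBalHom α) (a : A) :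
    |α a| ≤ lnorm a := by
  obtain ⟨n, hn⟩ := hA (a ⊔ -a)
  refine le_csInf ⟨n, show a ⊔ -a ≤ (n : ℝ) • 1 by rwa [Nat.cast_smul_eq_nsmul]⟩ fun r hr => ?_
  simpa [hα a, abs_eq_max_neg] using hα.monotone hr

end IsBalHom

theorem stmt6_general (X : Type) (w : X → ℝ) (hw : ∀ x, 0 ≤ w x)
    (F : Type) [LAlg F] (hFb : LAlg.IsBounded F)
    (f : X → F) (hf : ∀ x, lnorm (f x) ≤ w x)
    (ump : ∀ (A : Type) [LAlg A], LAlg.IsBounded A → LAlg.IsArch A →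
      ∀ h : X → A, (∀ x, lnorm (h x) ≤ w x) →
        ∃! α : F →ₐ[ℝ] A, IsBalHom α ∧ α ∘ f = h) :
    ∀ x, lnorm (f x) = w x := by
  intro x
  obtain ⟨α, ⟨hα, hαf⟩, -⟩ := ump ℝ LAlg.isBounded_real LAlg.isArch_real w fun y => by
    rw [lnorm_real, abs_of_nonneg (hw y)]
  refine le_antisymm (hf x) ?_
  have hαx : α (f x) = w x := congrFun hαf x
  calc w x = |α (f x)| := by rw [hαx, abs_of_nonneg (hw x)]
    _ ≤ lnorm (f x) := hα.abs_apply_le_lnorm hFb (f x)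

/-- if (F, f) is the free bounded archimedean ℓ-algebra on the weighted
set (X, w), then ‖f x‖ = w x for every x. -/
theorem stmt6 (X : Type) (w : X → ℝ) (hw : ∀ x, 0 ≤ w x)
    (F : Type) [LAlg F] (hFb : LAlg.IsBounded F) (hFa : LAlg.IsArch F)
    (f : X → F) (hf : ∀ x, lnorm (f x) ≤ w x)
    (ump : ∀ (A : Type) [LAlg A], LAlg.IsBounded A → LAlg.IsArch A →
      ∀ h : X → A, (∀ x, lnorm (h x) ≤ w x) →
        ∃! α : F →ₐ[ℝ] A, IsBalHom α ∧ α ∘ f = h) :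
    ∀ x, lnorm (f x) = w x :=
  stmt6_general X w hw F hFb f hf ump
end

section
/- Let (X, w) be a weighted set. Then there exist a unital vector lattice (F, u) and a function f : X → F with ‖f(x)‖ ≤ w(x) for all x ∈ X, such that for every unital vector lattice (V, v) and every function h : X → V with ‖h(x)‖ ≤ w(x) for all x ∈ X, there is a unique unital vector lattice homomorphism α : F → V with α ∘ f = h. Consequently, the forgetful functor from unital vector lattices to weighted sets has a left adjoint. -/
/-- A vector lattice (Riesz space): a real vector space with a lattice order such that
addition is translation-invariant and scalar multiplication by nonnegative reals
preserves nonnegativity. -/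
class VLat (V : Type*) extends AddCommGroup V, Module ℝ V, Lattice V where
  add_le_add_right' : ∀ a b : V, a ≤ b → ∀ c : V, a + c ≤ b + c
  smul_nonneg' : ∀ (r : ℝ) (a : V), 0 ≤ r → 0 ≤ a → 0 ≤ r • a

/-- `u` is a strong order unit of `V`. -/
def IsStrongUnit {V : Type*} [VLat V] (u : V) : Prop := ∀ a : V, ∃ n : ℕ, a ≤ n • u

/-- The norm ‖a‖ = inf {r : ℝ | |a| ≤ r·u} of a unital vector lattice (V, u),
where |a| = a ⊔ -a. -/
noncomputable def vnorm {V : Type*} [VLat V] (u : V) (a : V) : ℝ :=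
  sInf {r : ℝ | a ⊔ -a ≤ r • u}

/-- A unital vector lattice homomorphism (V, u) → (W, v): a linear map preserving
binary joins and sending `u` to `v`. -/
def IsUVLatHom {V W : Type*} [VLat V] [VLat W] (u : V) (v : W) (α : V →ₗ[ℝ] W) : Prop :=
  (∀ a b : V, α (a ⊔ b) = α a ⊔ α b) ∧ α u = v

/-- A bundled unital vector lattice. -/
structure UVLObj where
  carrier : Type
  [str : VLat carrier]
  unit : carrier
  unit_strong : IsStrongUnit unit

attribute [instance] UVLObj.str

/-!
The free object is the algebra of vector-lattice terms in the generators `x ∈ X` and a unit,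
modulo the identities that hold under every map `h : X → V` into a unital vector lattice with
`‖h x‖ ≤ w x`. Evaluation at all such maps embeds this quotient into their product, so it
inherits the vector-lattice laws and the universal map is evaluation at a single coordinate;
it is unique because the generators and the unit generate the quotient. Each term is bounded by
a fixed multiple of the unit under all admissible maps at once (a generator by `w x + 1`), so
the unit is strong, and `‖x‖ ≤ w x` holds coordinatewise.
-/

section VectorLattice

variable {V : Type*} [VLat V]

instance VLat.isOrderedAddMonoid : IsOrderedAddMonoid V where
  add_le_add_left := VLat.add_le_add_right'

instance VLat.isOrderedModule : IsOrderedModule ℝ V :=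
  .of_smul_nonneg fun r hr a ha => VLat.smul_nonneg' r a hr ha

lemma abs_smul_le_smul_abs (r : ℝ) (a : V) : |r • a| ≤ |r| • |a| := by
  rcases le_total 0 r with hr | hr
  · rw [abs_of_nonneg hr, abs_le', ← smul_neg]
    exact ⟨smul_le_smul_of_nonneg_left (le_abs_self a) hr,
      smul_le_smul_of_nonneg_left (neg_le_abs a) hr⟩
  · rw [abs_of_nonpos hr, abs_le', ← neg_smul, ← neg_smul_neg]
    exact ⟨smul_le_smul_of_nonneg_left (neg_le_abs a) (neg_nonneg.2 hr),
      smul_le_smul_of_nonneg_left (le_abs_self a) (neg_nonneg.2 hr)⟩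

lemma abs_sup_le_abs_add_abs (a b : V) : |a ⊔ b| ≤ |a| + |b| := by
  refine abs_le'.2 ⟨sup_le ?_ ?_, ?_⟩
  · exact le_add_of_le_of_nonneg (le_abs_self a) (abs_nonneg b)
  · exact le_add_of_nonneg_of_le (abs_nonneg a) (le_abs_self b)
  · rw [neg_sup]
    exact inf_le_left.trans <| le_add_of_le_of_nonneg (neg_le_abs a) (abs_nonneg b)

lemma IsStrongUnit.nonneg {u : V} (hu : IsStrongUnit u) : 0 ≤ u := by
  obtain ⟨n, hn⟩ := hu (-u)
  have : 0 ≤ ((n : ℝ) + 1) • u := by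
    rw [add_smul, one_smul, Nat.cast_smul_eq_nsmul]; exact neg_le_iff_add_nonneg.1 hn
  exact nonneg_of_smul_nonneg_of_pos_left this (by positivity)

-- `vnorm` is stated with `a ⊔ -a`, which is `|a|` by definition.
lemma IsStrongUnit.abs_le_smul_of_vnorm_lt {u a : V} (hu : IsStrongUnit u) {c : ℝ}
    (h : vnorm u a < c) : |a| ≤ c • u := by
  obtain ⟨n, hn⟩ := hu |a|
  have hn' : |a| ≤ (n : ℝ) • u := by rwa [Nat.cast_smul_eq_nsmul]
  obtain ⟨r, hr, hrc⟩ := exists_lt_of_csInf_lt (s := {r : ℝ | |a| ≤ r • u}) ⟨n, hn'⟩ h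
  exact (show |a| ≤ r • u from hr).trans (smul_le_smul_of_nonneg_right hrc.le hu.nonneg)

lemma vnorm_le_of_forall_lt {u a : V} {c : ℝ} (hbdd : BddBelow {r : ℝ | |a| ≤ r • u})
    (h : ∀ r, c < r → |a| ≤ r • u) : vnorm u a ≤ c :=
  le_of_forall_gt_imp_ge_of_dense fun r hr => csInf_le hbdd (h r hr)

def IsBoundedBy (u a : V) : Prop := ∃ C : ℝ, |a| ≤ C • u

namespace IsBoundedBy

variable {u a b : V}

lemma self (hu : 0 ≤ u) : IsBoundedBy u u := ⟨1, by rw [abs_of_nonneg hu, one_smul]⟩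

lemma neg (ha : IsBoundedBy u a) : IsBoundedBy u (-a) := by
  simpa only [IsBoundedBy, abs_neg] using ha

lemma mono (hb : IsBoundedBy u b) (h : |a| ≤ |b|) : IsBoundedBy u a := by
  obtain ⟨C, hC⟩ := hb
  exact ⟨C, h.trans hC⟩

lemma abs_add_abs (ha : IsBoundedBy u a) (hb : IsBoundedBy u b) :
    IsBoundedBy u (|a| + |b|) := by
  obtain ⟨C, hC⟩ := ha
  obtain ⟨D, hD⟩ := hb
  refine ⟨C + D, ?_⟩
  rw [abs_of_nonneg (add_nonneg (abs_nonneg a) (abs_nonneg b)), add_smul]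
  exact add_le_add hC hD

lemma add (ha : IsBoundedBy u a) (hb : IsBoundedBy u b) : IsBoundedBy u (a + b) :=
  (ha.abs_add_abs hb).mono ((abs_add_le a b).trans (le_abs_self _))

lemma sup (ha : IsBoundedBy u a) (hb : IsBoundedBy u b) : IsBoundedBy u (a ⊔ b) :=
  (ha.abs_add_abs hb).mono ((abs_sup_le_abs_add_abs a b).trans (le_abs_self _))

lemma smul (ha : IsBoundedBy u a) (r : ℝ) : IsBoundedBy u (r • a) := by
  obtain ⟨C, hC⟩ := ha
  refine ⟨|r| * C, (abs_smul_le_smul_abs r a).trans ?_⟩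
  rw [mul_smul]
  exact smul_le_smul_of_nonneg_left hC (abs_nonneg r)

end IsBoundedBy

lemma IsStrongUnit.of_forall_isBoundedBy {u : V} (hu : 0 ≤ u) (h : ∀ a, IsBoundedBy u a) :
    IsStrongUnit u := fun a => by
  obtain ⟨C, hC⟩ := h a
  refine ⟨⌈C⌉₊, ?_⟩
  rw [← Nat.cast_smul_eq_nsmul ℝ]
  exact (le_abs_self a).trans (hC.trans (smul_le_smul_of_nonneg_right (Nat.le_ceil C) hu))

end VectorLattice

noncomputable instance : VLat ℝ where
  add_le_add_right' _ _ h c := add_le_add_left h c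
  smul_nonneg' _ _ := mul_nonneg

lemma isStrongUnit_one : IsStrongUnit (1 : ℝ) := fun a =>
  ⟨⌈a⌉₊, by simpa using Nat.le_ceil a⟩

lemma vnorm_one_zero : vnorm (1 : ℝ) 0 = 0 := by
  simp only [vnorm, neg_zero, max_self, smul_eq_mul, mul_one]
  exact csInf_Ici

instance Pi.vLat {ι : Type*} {π : ι → Type*} [∀ i, VLat (π i)] : VLat (∀ i, π i) where
  add_le_add_right' _ _ h c i := add_le_add_left (h i) (c i)
  smul_nonneg' _ _ hr ha i := smul_nonneg hr (ha i)

inductive VLatTerm (X : Type) : Type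
  | var : X → VLatTerm X
  | unit : VLatTerm X
  | add : VLatTerm X → VLatTerm X → VLatTerm X
  | neg : VLatTerm X → VLatTerm X
  | smul : ℝ → VLatTerm X → VLatTerm X
  | sup : VLatTerm X → VLatTerm X → VLatTerm X

namespace VLatTerm

variable {X : Type}

def eval {V : Type*} [VLat V] (u : V) (g : X → V) : VLatTerm X → V
  | var x => g x
  | unit => u
  | add t s => t.eval u g + s.eval u g
  | neg t => -t.eval u g
  | smul r t => r • t.eval u g
  | sup t s => t.eval u g ⊔ s.eval u g

lemma _root_.IsUVLatHom.map_eval {V W : Type*} [VLat V] [VLat W] {u : V} {v : W}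
    {α : V →ₗ[ℝ] W} (hα : IsUVLatHom u v α) (g : X → V) (t : VLatTerm X) :
    α (t.eval u g) = t.eval v (α ∘ g) := by
  induction t with
  | var x => rfl
  | unit => exact hα.2
  | add t s iht ihs => simp only [eval, map_add, iht, ihs]
  | neg t iht => simp only [eval, map_neg, iht]
  | smul r t iht => simp only [eval, map_smul, iht]
  | sup t s iht ihs => simp only [eval, hα.1, iht, ihs]

end VLatTerm

structure WeightedMap {X : Type} (w : X → ℝ) where
  target : UVLObj
  toFun : X → target.carrier
  vnorm_le : ∀ x, vnorm target.unit (toFun x) ≤ w x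

noncomputable def WeightedMap.toReal {X : Type} {w : X → ℝ} (hw : ∀ x, 0 ≤ w x) :
    WeightedMap w :=
  ⟨⟨ℝ, 1, isStrongUnit_one⟩, 0, fun x => vnorm_one_zero ▸ hw x⟩

def WeightedMap.realize {X : Type} {w : X → ℝ} (φ : WeightedMap w) (t : VLatTerm X) :
    φ.target.carrier :=
  t.eval φ.target.unit φ.toFun

-- The product over all admissible maps lives in `Type 1`; the quotient of terms is its small
-- sub-vector-lattice generated by the unit and the generators.
def FreeUVL {X : Type} (w : X → ℝ) : Type :=
  Quotient (Setoid.ker fun t (φ : WeightedMap w) => φ.realize t)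

namespace FreeUVL

variable {X : Type} {w : X → ℝ}

def mk (t : VLatTerm X) : FreeUVL w := Quotient.mk _ t

@[elab_as_elim]
lemma ind {p : FreeUVL w → Prop} (h : ∀ t, p (mk t)) (a : FreeUVL w) : p a := Quotient.ind h a

def embed : FreeUVL w → ∀ φ : WeightedMap w, φ.target.carrier := Setoid.kerLift _

lemma embed_injective : Function.Injective (embed (w := w)) := Setoid.kerLift_injective _

instance : Zero (FreeUVL w) := ⟨mk (.smul 0 .unit)⟩
instance : Add (FreeUVL w) :=
  ⟨Quotient.map₂ .add fun _ _ h₁ _ _ h₂ => congrArg₂ (· + ·) h₁ h₂⟩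
instance : Neg (FreeUVL w) := ⟨Quotient.map .neg fun _ _ h => congrArg (-·) h⟩
instance : Sub (FreeUVL w) := ⟨fun a b => a + -b⟩
instance : SMul ℝ (FreeUVL w) :=
  ⟨fun r => Quotient.map (.smul r) fun _ _ h => congrArg (r • ·) h⟩
instance : SMul ℕ (FreeUVL w) := ⟨fun n a => (n : ℝ) • a⟩
instance : SMul ℤ (FreeUVL w) := ⟨fun n a => (n : ℝ) • a⟩
instance : Max (FreeUVL w) :=
  ⟨Quotient.map₂ .sup fun _ _ h₁ _ _ h₂ => congrArg₂ (· ⊔ ·) h₁ h₂⟩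
instance : Min (FreeUVL w) := ⟨fun a b => -(-a ⊔ -b)⟩
instance : LE (FreeUVL w) := ⟨fun a b => embed a ≤ embed b⟩
instance : LT (FreeUVL w) := ⟨fun a b => embed a < embed b⟩

lemma embed_zero : embed (0 : FreeUVL w) = 0 := funext fun _ => zero_smul ℝ _

lemma embed_add (a b : FreeUVL w) : embed (a + b) = embed a + embed b := by
  induction a using FreeUVL.ind; induction b using FreeUVL.ind; rfl

lemma embed_neg (a : FreeUVL w) : embed (-a) = -embed a := by
  induction a using FreeUVL.ind; rfl

lemma embed_smul (r : ℝ) (a : FreeUVL w) : embed (r • a) = r • embed a := by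
  induction a using FreeUVL.ind; rfl

lemma embed_sup (a b : FreeUVL w) : embed (a ⊔ b) = embed a ⊔ embed b := by
  induction a using FreeUVL.ind; induction b using FreeUVL.ind; rfl

lemma embed_inf (a b : FreeUVL w) : embed (a ⊓ b) = embed a ⊓ embed b := by
  change embed (-(-a ⊔ -b)) = _
  rw [embed_neg, embed_sup, embed_neg, embed_neg, neg_sup, neg_neg, neg_neg]

noncomputable instance : AddCommGroup (FreeUVL w) :=
  embed_injective.addCommGroup _ embed_zero embed_add embed_neg
    (fun a b => by rw [sub_eq_add_neg, ← embed_neg, ← embed_add]; rfl)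
    (fun a n => by rw [← Nat.cast_smul_eq_nsmul ℝ, ← embed_smul]; rfl)
    (fun a n => by rw [← Int.cast_smul_eq_zsmul ℝ, ← embed_smul]; rfl)

noncomputable instance : Module ℝ (FreeUVL w) :=
  embed_injective.module ℝ (AddMonoidHom.mk' embed embed_add) embed_smul

noncomputable instance : Lattice (FreeUVL w) :=
  embed_injective.lattice _ Iff.rfl Iff.rfl embed_sup embed_inf

noncomputable instance : VLat (FreeUVL w) where
  add_le_add_right' a b h c := by
    change embed (a + c) ≤ embed (b + c)
    rw [embed_add, embed_add]
    exact add_le_add_left (show embed a ≤ embed b from h) _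
  smul_nonneg' r a hr ha := by
    have ha : 0 ≤ embed a := embed_zero (w := w) ▸ ha
    change embed 0 ≤ embed (r • a)
    rw [embed_zero, embed_smul]
    exact smul_nonneg hr ha

def unit : FreeUVL w := mk .unit

def gen (x : X) : FreeUVL w := mk (.var x)

lemma embed_abs (a : FreeUVL w) : embed |a| = |embed a| :=
  (embed_sup a (-a)).trans (congrArg (embed a ⊔ ·) (embed_neg a))

lemma isBoundedBy_iff {a b : FreeUVL w} : IsBoundedBy a b ↔ IsBoundedBy (embed a) (embed b) := by
  simp only [IsBoundedBy, ← embed_abs, ← embed_smul]; rfl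

lemma embed_unit_nonneg : 0 ≤ embed (unit : FreeUVL w) := fun φ => φ.target.unit_strong.nonneg

lemma unit_nonneg : (0 : FreeUVL w) ≤ unit := by
  change embed 0 ≤ embed unit
  rw [embed_zero]
  exact embed_unit_nonneg

lemma isStrongUnit_unit : IsStrongUnit (unit : FreeUVL w) := by
  refine .of_forall_isBoundedBy unit_nonneg fun a => ?_
  induction a using FreeUVL.ind with | h t => ?_
  rw [isBoundedBy_iff]
  induction t with
  | var x =>
    exact ⟨w x + 1, fun φ =>
      φ.target.unit_strong.abs_le_smul_of_vnorm_lt ((φ.vnorm_le x).trans_lt (lt_add_one _))⟩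
  | unit => exact .self embed_unit_nonneg
  | add _ _ iht ihs => exact iht.add ihs
  | neg _ iht => exact iht.neg
  | smul r _ iht => exact iht.smul r
  | sup _ _ iht ihs => exact iht.sup ihs

lemma vnorm_gen_le (hw : ∀ x, 0 ≤ w x) (x : X) : vnorm unit (gen x : FreeUVL w) ≤ w x := by
  refine vnorm_le_of_forall_lt ⟨0, fun r hr => ?_⟩ fun r hr => ?_
  · -- without this lower bound the `sInf` in `vnorm` would be a junk value
    have : |(0 : ℝ)| ≤ r • (1 : ℝ) := hr (WeightedMap.toReal hw)
    simpa using this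
  · change embed |gen x| ≤ embed (r • unit)
    rw [embed_abs, embed_smul]
    exact fun φ => φ.target.unit_strong.abs_le_smul_of_vnorm_lt ((φ.vnorm_le x).trans_lt hr)

def lift (φ : WeightedMap w) : FreeUVL w →ₗ[ℝ] φ.target.carrier where
  toFun a := embed a φ
  map_add' a b := congrFun (embed_add a b) φ
  map_smul' r a := congrFun (embed_smul r a) φ

lemma isUVLatHom_lift (φ : WeightedMap w) : IsUVLatHom unit φ.target.unit (lift φ) :=
  ⟨fun a b => congrFun (embed_sup a b) φ, rfl⟩

lemma lift_comp_gen (φ : WeightedMap w) : lift φ ∘ gen = φ.toFun := rfl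

lemma mk_eq_eval (t : VLatTerm X) : (mk t : FreeUVL w) = t.eval unit gen := by
  induction t with
  | var x => rfl
  | unit => rfl
  | add t s iht ihs => rw [VLatTerm.eval, ← iht, ← ihs]; rfl
  | neg t iht => rw [VLatTerm.eval, ← iht]; rfl
  | smul r t iht => rw [VLatTerm.eval, ← iht]; rfl
  | sup t s iht ihs => rw [VLatTerm.eval, ← iht, ← ihs]; rfl

lemma hom_ext {V : Type*} [VLat V] {v : V} {α β : FreeUVL w →ₗ[ℝ] V}
    (hα : IsUVLatHom unit v α) (hβ : IsUVLatHom unit v β) (h : α ∘ gen = β ∘ gen) :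
    α = β := by
  ext a
  induction a using FreeUVL.ind with | h t => ?_
  change α (mk t) = β (mk t)
  rw [mk_eq_eval, hα.map_eval, hβ.map_eval, h]

end FreeUVL

/-- the free unital vector lattice on a weighted set (X, w) exists;
consequently the forgetful functor from unital vector lattices to weighted sets has a
left adjoint. -/
theorem stmt19 (X : Type) (w : X → ℝ) (hw : ∀ x, 0 ≤ w x) :
    ∃ (F : UVLObj) (f : X → F.carrier),
      (∀ x, vnorm F.unit (f x) ≤ w x) ∧
      ∀ (V : UVLObj) (h : X → V.carrier), (∀ x, vnorm V.unit (h x) ≤ w x) →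
        ∃! α : F.carrier →ₗ[ℝ] V.carrier, IsUVLatHom F.unit V.unit α ∧ α ∘ f = h := by
  refine ⟨⟨FreeUVL w, FreeUVL.unit, FreeUVL.isStrongUnit_unit⟩, FreeUVL.gen,
    FreeUVL.vnorm_gen_le hw, fun V h hh => ?_⟩
  let φ : WeightedMap w := ⟨V, h, hh⟩
  refine ⟨FreeUVL.lift φ, ⟨FreeUVL.isUVLatHom_lift φ, FreeUVL.lift_comp_gen φ⟩, ?_⟩
  rintro β ⟨hβ, hβgen⟩
  exact FreeUVL.hom_ext hβ (FreeUVL.isUVLatHom_lift φ)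
    (hβgen.trans (FreeUVL.lift_comp_gen φ).symm)
end
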